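/- Let T : D ⥤ E be a functor between small categories. The colimit functor colim : (E ⥤ Set) ⥤ Set preserves the limit of the Dᵒᵖ-shaped diagram of representables d ↦ E(T d, −) in the functor category E ⥤ Set if and only if the category of cocones on T is nonempty and connected. -/

import Mathlib

open CategoryTheory CategoryTheory.Limits Opposite

/-!
The cocone functor `T.cocones` is the apex of a limit cone over `d ↦ E(T d, −)`, and the colimit
of each corepresentable `E(T d, −)` is a point, so `colim` preserves this limit iff
`colim T.cocones` is a point. Its elements are cocones on `T` modulo the equivalence relation
generated by cocone morphisms, that is, the connected components of `Cocone T`.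
-/

namespace Paper

section Types

variable {J : Type*} [Category J]

theorem nonempty_isLimit_iff_of_unique {G : J ⥤ Type*} [∀ j, Unique (G.obj j)] (c : Cone G) :
    Nonempty (IsLimit c) ↔ Nonempty c.pt ∧ Subsingleton c.pt := by
  have : Unique G.sections :=
    { default := ⟨fun _ => default, fun _ => Subsingleton.elim _ _⟩
      uniq := fun _ => Subtype.ext (funext fun _ => Subsingleton.elim _ _) }
  rw [Types.isLimit_iff_bijective_sectionOfCone]
  constructor
  · intro h
    exact ⟨(Equiv.ofBijective _ h).nonempty, (Equiv.ofBijective _ h).subsingleton⟩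
  · rintro ⟨⟨x⟩, hsub⟩
    exact ⟨fun _ _ _ => Subsingleton.elim _ _, fun s => ⟨x, Subsingleton.elim _ _⟩⟩

end Types

universe v u

section CoconesCone

variable {D : Type v} [SmallCategory D] {E : Type u} [Category.{v} E] (T : D ⥤ E)

def coconesCone : Cone (T.op ⋙ coyoneda) where
  pt := T.cocones
  π.app d := { app e := TypeCat.ofHom fun κ => κ.app d.unop }
  π.naturality d d' g := by
    ext e κ
    simp

noncomputable def coconesConeIsLimit : IsLimit (coconesCone T) :=
  evaluationJointlyReflectsLimits _ fun e =>
    ((Types.isLimit_iff_bijective_sectionOfCone _).mpr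
      ⟨fun _ _ h => NatTrans.ext (funext fun d => congr_arg (fun s => s.1 (op d)) h),
      fun s => ⟨opCompYonedaSectionsEquiv T e s, rfl⟩⟩).some

end CoconesCone

section CoconeClass

variable {D : Type*} [Category D] {E : Type v} [SmallCategory E] (T : D ⥤ E)

noncomputable def coconeClass (κ : Cocone T) : colimit T.cocones :=
  colimit.ι T.cocones κ.pt κ.ι

theorem coconeClass_surjective : Function.Surjective (coconeClass T) := fun x => by
  obtain ⟨e, κ, rfl⟩ := Types.jointly_surjective' x
  exact ⟨⟨e, κ⟩, rfl⟩

theorem coconeClass_eq_of_hom {κ κ' : Cocone T} (f : κ ⟶ κ') :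
    coconeClass T κ = coconeClass T κ' :=
  Types.colimit_sound f.hom (NatTrans.ext (funext f.w))

theorem coconeClass_eq_of_zigzag {κ κ' : Cocone T} (h : Zigzag κ κ') :
    coconeClass T κ = coconeClass T κ' := by
  induction h with
  | refl => rfl
  | tail _ h ih =>
    obtain ⟨⟨f⟩⟩ | ⟨⟨f⟩⟩ := h
    · exact ih.trans (coconeClass_eq_of_hom T f)
    · exact ih.trans (coconeClass_eq_of_hom T f).symm

theorem zigzag_mk_of_eqvGen_colimitTypeRel {p q : Σ e, T.cocones.obj e}
    (h : Relation.EqvGen T.cocones.ColimitTypeRel p q) :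
    Zigzag (Cocone.mk p.1 p.2) (Cocone.mk q.1 q.2) := by
  induction h with
  | rel p q h =>
    obtain ⟨f, hf⟩ := h
    obtain ⟨e, κ⟩ := p
    obtain ⟨e', κ'⟩ := q
    dsimp at f hf
    subst hf
    exact Zigzag.of_hom { hom := f }
  | refl => rfl
  | symm _ _ _ ih => exact ih.symm
  | trans _ _ _ _ _ ih₁ ih₂ => exact ih₁.trans ih₂

theorem coconeClass_eq_iff {κ κ' : Cocone T} :
    coconeClass T κ = coconeClass T κ' ↔ Zigzag κ κ' :=
  ⟨fun h => zigzag_mk_of_eqvGen_colimitTypeRel T (Types.colimit_eq h), coconeClass_eq_of_zigzag T⟩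

theorem isConnected_cocone_iff :
    IsConnected (Cocone T) ↔ Nonempty (colimit T.cocones) ∧ Subsingleton (colimit T.cocones) := by
  constructor
  · intro h
    obtain ⟨κ⟩ := h.is_nonempty
    refine ⟨⟨coconeClass T κ⟩, ⟨fun x y => ?_⟩⟩
    obtain ⟨κ₁, rfl⟩ := coconeClass_surjective T x
    obtain ⟨κ₂, rfl⟩ := coconeClass_surjective T y
    exact (coconeClass_eq_iff T).2 (isPreconnected_zigzag κ₁ κ₂)
  · rintro ⟨⟨x⟩, hsub⟩
    obtain ⟨κ, -⟩ := coconeClass_surjective T x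
    have : Nonempty (Cocone T) := ⟨κ⟩
    exact zigzag_isConnected fun κ₁ κ₂ => (coconeClass_eq_iff T).1 (Subsingleton.elim _ _)

end CoconeClass

/-- For a functor `T : D ⥤ E` between small categories, the
colimit functor `colim : (E ⥤ Set) ⥤ Set` preserves the limit of the
`Dᵒᵖ`-shaped diagram of representables `d ↦ E(T d, −)` iff the category of
cocones on `T` is nonempty and connected. -/
theorem preservesLimit_representables_iff_cocones_connected
    (D E : Type) [SmallCategory D] [SmallCategory E] (T : D ⥤ E) :
    PreservesLimit (T.op ⋙ coyoneda) (colim : (E ⥤ Type) ⥤ Type) ↔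
      IsConnected (Cocone T) := by
  have (d : Dᵒᵖ) : Unique (((T.op ⋙ coyoneda) ⋙ colim).obj d) :=
    (Coyoneda.colimitCoyonedaIso (op (T.obj d.unop))).toEquiv.unique
  rw [preservesLimit_iff_isLimit_mapCone (coconesConeIsLimit T), nonempty_isLimit_iff_of_unique,
    isConnected_cocone_iff]
  rfl

end Paper
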